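/- Let G be a simple graph on vertex set V = {1,...,n}, let ℓ be a real number and X = (x_1,...,x_n)^T a real vector with L(G) X = ℓ X, and let λ and μ be real numbers such that every pair of adjacent vertices of G has at least λ common neighbors and every pair of distinct nonadjacent vertices of G has at least μ common neighbors (with λ ≥ 0 and μ ≥ 0). Then Σ_{i ∈ V} (d_i − ℓ)² x_i² ≤ Σ_{i ∈ V} ( Σ_{j ∈ G_1(i)} d_j ) x_i² − λ Σ_{j < k, jk ∈ E} (x_j − x_k)² − μ Σ_{j < k, jk ∉ E} (x_j − x_k)². -/

import Mathlib

/-!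
The eigen-equation reads `(d_i - ℓ) x_i = ∑_{j ∼ i} x_j`, i.e. `A X = (D - ℓ) X` for the adjacency
matrix `A`, so the left side is `‖A X‖² = Xᵀ A² X`. The entry `(A²)_{jk}` counts the common
neighbours of `j` and `k`, and the `j`-th row sum of `A²` is `∑_{i ∼ j} d_i`. Writing the quadratic
form of the symmetric matrix `A²` as `∑_j (row sum)_j x_j² - ∑_{j<k} (A²)_{jk} (x_j - x_k)²`, the
inequality follows by bounding `(A²)_{jk}` below by `λ` or `μ`.
-/

open Finset Matrix

theorem Finset.sum_sum_eq_sum_diag_add_sum_lt {ι M : Type*} [Fintype ι] [LinearOrder ι]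
    [AddCommMonoid M] (f : ι → ι → M) :
    ∑ i, ∑ j, f i j =
      ∑ i, f i i + ∑ p ∈ univ.filter (fun p : ι × ι => p.1 < p.2), (f p.1 p.2 + f p.2 p.1) := by
  have htri : ∀ i j, f i j = (if i < j then f i j else 0) + (if i = j then f i j else 0) +
      (if j < i then f i j else 0) := by
    intro i j
    rcases lt_trichotomy i j with h | rfl | h
    · simp [h, h.ne, h.not_gt]
    · simp
    · simp [h, h.ne', h.not_gt]
  have hupper : ∑ i, ∑ j, (if j < i then f i j else 0) = ∑ i, ∑ j, (if i < j then f j i else 0) :=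
    sum_comm
  simp_rw [sum_filter, Fintype.sum_prod_type, ite_add_zero, sum_add_distrib]
  conv_lhs => enter [2, i, 2, j]; rw [htri i j]
  simp only [sum_add_distrib, sum_ite_eq, mem_univ, if_true, hupper]
  abel

theorem Matrix.IsSymm.dotProduct_mulVec_self {ι R : Type*} [Fintype ι] [LinearOrder ι]
    [CommRing R] {M : Matrix ι ι R} (hM : M.IsSymm) (x : ι → R) :
    x ⬝ᵥ M *ᵥ x = ∑ i, (∑ j, M i j) * x i ^ 2 -
      ∑ p ∈ univ.filter (fun p : ι × ι => p.1 < p.2), M p.1 p.2 * (x p.1 - x p.2) ^ 2 := by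
  simp only [dotProduct, mulVec, mul_sum, sum_mul]
  rw [sum_sum_eq_sum_diag_add_sum_lt, sum_sum_eq_sum_diag_add_sum_lt, add_sub_assoc,
    ← sum_sub_distrib]
  congr 1
  · exact sum_congr rfl fun i _ => by ring
  · refine sum_congr rfl fun p _ => ?_
    rw [hM.apply]
    ring

theorem Matrix.IsSymm.mulVec_dotProduct_mulVec_self {ι R : Type*} [Fintype ι] [CommSemiring R]
    {M : Matrix ι ι R} (hM : M.IsSymm) (x : ι → R) :
    M *ᵥ x ⬝ᵥ M *ᵥ x = x ⬝ᵥ (M * M) *ᵥ x := by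
  have hx : x ᵥ* M = M *ᵥ x := by
    conv_lhs => rw [← hM.eq]
    exact vecMul_transpose M x
  rw [← mulVec_mulVec, dotProduct_mulVec x M, hx]

theorem Finset.mul_sum_filter_add_mul_sum_filter_not_le {ι R : Type*} [Semiring R]
    [PartialOrder R] [IsOrderedRing R] (s : Finset ι) (P : ι → Prop) [DecidablePred P]
    {a b : R} {w f : ι → R} (hf : ∀ i ∈ s, 0 ≤ f i) (ha : ∀ i ∈ s, P i → a ≤ w i)
    (hb : ∀ i ∈ s, ¬ P i → b ≤ w i) :
    a * ∑ i ∈ s with P i, f i + b * ∑ i ∈ s with ¬ P i, f i ≤ ∑ i ∈ s, w i * f i := by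
  rw [← sum_filter_add_sum_filter_not s P, mul_sum, mul_sum]
  refine add_le_add (sum_le_sum fun i hi => ?_) (sum_le_sum fun i hi => ?_) <;>
    rw [mem_filter] at hi
  · exact mul_le_mul_of_nonneg_right (ha i hi.1 hi.2) (hf i hi.1)
  · exact mul_le_mul_of_nonneg_right (hb i hi.1 hi.2) (hf i hi.1)

namespace SimpleGraph

variable {V : Type*} [Fintype V] (G : SimpleGraph V) [DecidableRel G.Adj]

theorem adjMatrix_mul_self_apply {α : Type*} [NonAssocSemiring α] [DecidableEq V] (v w : V) :
    (G.adjMatrix α * G.adjMatrix α) v w = #(G.neighborFinset v ∩ G.neighborFinset w) := by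
  rw [adjMatrix_mul_apply, ← filter_mem_eq_inter, card_filter]
  push_cast
  simp [adjMatrix_apply, adj_comm]

theorem sum_adjMatrix_mul_self_apply {α : Type*} [NonAssocSemiring α] (v : V) :
    ∑ w, (G.adjMatrix α * G.adjMatrix α) v w = ∑ u ∈ G.neighborFinset v, (G.degree u : α) := by
  simp only [adjMatrix_mul_apply]
  rw [sum_comm]
  simp [adjMatrix_apply, degree_eq_sum_if_adj]

theorem adjMatrix_mulVec_apply_of_lapMatrix_mulVec_eq_smul {R : Type*} [NonAssocRing R]
    [DecidableEq V] {ℓ : R} {x : V → R} (h : G.lapMatrix R *ᵥ x = ℓ • x) (v : V) :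
    (G.adjMatrix R *ᵥ x) v = (G.degree v - ℓ) * x v := by
  have hv := congrFun h v
  rw [lapMatrix_mulVec_apply, Pi.smul_apply, smul_eq_mul] at hv
  rw [adjMatrix_mulVec_apply, sub_mul, ← hv, sub_sub_cancel]

end SimpleGraph

theorem eigen_quadratic_inequality_general (n : ℕ) (G : SimpleGraph (Fin n))
    [DecidableRel G.Adj]
    (ℓ : ℝ) (X : Fin n → ℝ)
    (heig : (G.lapMatrix ℝ).mulVec X = ℓ • X)
    (lam mu : ℝ)
    (hlam : ∀ i j : Fin n, G.Adj i j →
      lam ≤ ((G.neighborFinset i ∩ G.neighborFinset j).card : ℝ))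
    (hmu : ∀ i j : Fin n, i ≠ j → ¬ G.Adj i j →
      mu ≤ ((G.neighborFinset i ∩ G.neighborFinset j).card : ℝ)) :
    ∑ i, ((G.degree i : ℝ) - ℓ) ^ 2 * X i ^ 2 ≤
      (∑ i, (∑ j ∈ G.neighborFinset i, (G.degree j : ℝ)) * X i ^ 2)
      - lam * (∑ p ∈ Finset.univ.filter
            (fun p : Fin n × Fin n => p.1 < p.2 ∧ G.Adj p.1 p.2),
          (X p.1 - X p.2) ^ 2)
      - mu * (∑ p ∈ Finset.univ.filter
            (fun p : Fin n × Fin n => p.1 < p.2 ∧ ¬ G.Adj p.1 p.2),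
          (X p.1 - X p.2) ^ 2) := by
  have hA := G.isSymm_adjMatrix (α := ℝ)
  have hAA : (G.adjMatrix ℝ * G.adjMatrix ℝ).IsSymm := by
    simpa [hA.eq] using isSymm_mul_transpose_self (G.adjMatrix ℝ)
  have hpairs := mul_sum_filter_add_mul_sum_filter_not_le
    (univ.filter fun p : Fin n × Fin n => p.1 < p.2) (fun p => G.Adj p.1 p.2)
    (w := fun p => (#(G.neighborFinset p.1 ∩ G.neighborFinset p.2) : ℝ))
    (f := fun p => (X p.1 - X p.2) ^ 2) (fun p _ => sq_nonneg _)
    (fun p _ hp => hlam _ _ hp) (fun p hp hp' => hmu _ _ (mem_filter.1 hp).2.ne hp')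
  simp only [filter_filter] at hpairs
  calc ∑ i, ((G.degree i : ℝ) - ℓ) ^ 2 * X i ^ 2
      = G.adjMatrix ℝ *ᵥ X ⬝ᵥ G.adjMatrix ℝ *ᵥ X := by
        simp only [dotProduct, G.adjMatrix_mulVec_apply_of_lapMatrix_mulVec_eq_smul heig]
        exact sum_congr rfl fun i _ => by ring
    _ = ∑ i, (∑ j ∈ G.neighborFinset i, (G.degree j : ℝ)) * X i ^ 2 -
          ∑ p ∈ univ.filter (fun p : Fin n × Fin n => p.1 < p.2),
            (#(G.neighborFinset p.1 ∩ G.neighborFinset p.2) : ℝ) * (X p.1 - X p.2) ^ 2 := by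
        rw [hA.mulVec_dotProduct_mulVec_self, hAA.dotProduct_mulVec_self]
        simp_rw [G.sum_adjMatrix_mul_self_apply, G.adjMatrix_mul_self_apply]
    _ ≤ _ := by linarith

/-- **Lemma.** For a simple graph `G` on `{1,...,n}`, a real `ℓ` and a vector `X`
with `L(G) X = ℓ X`, and reals `0 ≤ λ ≤ λ(G)`, `0 ≤ μ ≤ μ(G)`:
`∑_i (d_i − ℓ)² x_i² ≤ ∑_i (∑_{j∈N(i)} d_j) x_i²
  − λ ∑_{j<k, jk∈E} (x_j − x_k)² − μ ∑_{j<k, jk∉E} (x_j − x_k)²`. -/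
theorem eigen_quadratic_inequality (n : ℕ) (G : SimpleGraph (Fin n))
    [DecidableRel G.Adj]
    (ℓ : ℝ) (X : Fin n → ℝ)
    (heig : (G.lapMatrix ℝ).mulVec X = ℓ • X)
    (lam mu : ℝ) (hlam0 : 0 ≤ lam) (hmu0 : 0 ≤ mu)
    (hlam : ∀ i j : Fin n, G.Adj i j →
      lam ≤ ((G.neighborFinset i ∩ G.neighborFinset j).card : ℝ))
    (hmu : ∀ i j : Fin n, i ≠ j → ¬ G.Adj i j →
      mu ≤ ((G.neighborFinset i ∩ G.neighborFinset j).card : ℝ)) :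
    ∑ i, ((G.degree i : ℝ) - ℓ) ^ 2 * X i ^ 2 ≤
      (∑ i, (∑ j ∈ G.neighborFinset i, (G.degree j : ℝ)) * X i ^ 2)
      - lam * (∑ p ∈ Finset.univ.filter
            (fun p : Fin n × Fin n => p.1 < p.2 ∧ G.Adj p.1 p.2),
          (X p.1 - X p.2) ^ 2)
      - mu * (∑ p ∈ Finset.univ.filter
            (fun p : Fin n × Fin n => p.1 < p.2 ∧ ¬ G.Adj p.1 p.2),
          (X p.1 - X p.2) ^ 2) :=
  eigen_quadratic_inequality_general n G ℓ X heig lam mu hlam hmu
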